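/- For every real r, as T → 0 from the right, the variance of the second coordinate has the Taylor approximation Var₂(T) = (r² T² / 3)(1 − T²/5) + O(T⁶); that is, the function T ↦ Var₂(T) − (r² T² / 3)(1 − T²/5) is big-O of T ↦ T⁶ along the filter of punctured right neighborhoods of 0. -/

import Mathlib

/-!
Exactly, `Var₂(T) = r² (2T − sin 2T) / (4T)`, and subtracting the claimed expansion leaves
`−r² / (4T)` times the remainder of the degree-5 Taylor polynomial of `sin` at `2T`. For `x ≥ 0`
the Taylor remainders of `sin` and `cos` alternate in sign: each is, up to sign, the integral
from `0` of the previous one, starting from `1 − cos x ≥ 0`. Hence the remainder is bounded by the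
first omitted term `x⁷ / 7!`, and the error is `O(T⁷ / T) = O(T⁶)`.
-/

open MeasureTheory intervalIntegral Asymptotics Filter

/-- Variance of the second coordinate under the uniform distribution on the arc. -/
noncomputable def Var2 (r T : ℝ) : ℝ :=
  (1 / (2 * T)) * ∫ t in (-T)..T, (r * Real.sin t) ^ 2

open Finset Nat Real

theorem nonneg_of_hasDerivAt_nonneg {f f' : ℝ → ℝ} (hf : ∀ x, HasDerivAt f (f' x) x)
    (h0 : f 0 = 0) (hf' : ∀ x, 0 ≤ x → 0 ≤ f' x) {x : ℝ} (hx : 0 ≤ x) : 0 ≤ f x := by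
  have hmono : MonotoneOn f (Set.Ici 0) :=
    monotoneOn_of_hasDerivWithinAt_nonneg (convex_Ici 0)
      (fun y _ => (hf y).continuousAt.continuousWithinAt) (fun y _ => (hf y).hasDerivWithinAt)
      (fun y hy => hf' y (interior_subset hy))
  simpa [h0] using hmono Set.self_mem_Ici hx hx

namespace Real

noncomputable def sinTaylor (n : ℕ) (x : ℝ) : ℝ :=
  ∑ k ∈ range n, (-1) ^ k * x ^ (2 * k + 1) / (2 * k + 1)!

noncomputable def cosTaylor (n : ℕ) (x : ℝ) : ℝ :=
  ∑ k ∈ range n, (-1) ^ k * x ^ (2 * k) / (2 * k)!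

theorem sinTaylor_succ (n : ℕ) (x : ℝ) :
    sinTaylor (n + 1) x = sinTaylor n x + (-1) ^ n * x ^ (2 * n + 1) / (2 * n + 1)! :=
  sum_range_succ _ _

theorem sinTaylor_three (x : ℝ) : sinTaylor 3 x = x - x ^ 3 / 6 + x ^ 5 / 120 := by
  simp only [sinTaylor, sum_range_succ, range_zero, sum_empty]
  norm_num [factorial]
  ring

theorem cosTaylor_succ_eq (n : ℕ) (x : ℝ) : cosTaylor (n + 1) x =
    ∑ k ∈ range n, (-1 : ℝ) ^ (k + 1) * x ^ (2 * k + 2) / (2 * k + 2)! + 1 := by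
  simp [cosTaylor, sum_range_succ', mul_add]

theorem cosTaylor_succ_zero_right (n : ℕ) : cosTaylor (n + 1) 0 = 1 := by
  simp [cosTaylor, sum_range_succ']

theorem hasDerivAt_sinTaylor (n : ℕ) (x : ℝ) :
    HasDerivAt (sinTaylor n) (cosTaylor n x) x := by
  refine HasDerivAt.fun_sum fun k _ => ?_
  refine (((hasDerivAt_pow (2 * k + 1) x).const_mul ((-1 : ℝ) ^ k)).div_const
    ((2 * k + 1)! : ℝ)).congr_deriv ?_
  rw [factorial_succ]
  push_cast
  field_simp

theorem hasDerivAt_cosTaylor_succ (n : ℕ) (x : ℝ) :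
    HasDerivAt (cosTaylor (n + 1)) (-sinTaylor n x) x := by
  rw [funext (cosTaylor_succ_eq n), sinTaylor, ← sum_neg_distrib]
  refine (HasDerivAt.fun_sum fun k _ => ?_).add_const 1
  refine (((hasDerivAt_pow (2 * k + 2) x).const_mul ((-1 : ℝ) ^ (k + 1))).div_const
    ((2 * k + 2)! : ℝ)).congr_deriv ?_
  rw [show 2 * k + 2 = (2 * k + 1) + 1 by ring, factorial_succ]
  push_cast
  field_simp
  ring

theorem sin_sub_sinTaylor_sign_of_cos {n : ℕ}
    (hcos : ∀ y, 0 ≤ y → 0 ≤ (-1) ^ n * (cos y - cosTaylor n y)) {x : ℝ} (hx : 0 ≤ x) :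
    0 ≤ (-1) ^ n * (sin x - sinTaylor n x) :=
  nonneg_of_hasDerivAt_nonneg
    (fun y => ((hasDerivAt_sin y).sub (hasDerivAt_sinTaylor n y)).const_mul _)
    (by simp [sinTaylor]) hcos hx

theorem cos_sub_cosTaylor_succ_sign_of_sin {n : ℕ}
    (hsin : ∀ y, 0 ≤ y → 0 ≤ (-1) ^ n * (sin y - sinTaylor n y)) {x : ℝ} (hx : 0 ≤ x) :
    0 ≤ (-1) ^ (n + 1) * (cos x - cosTaylor (n + 1) x) := by
  refine nonneg_of_hasDerivAt_nonneg
    (fun y => ((hasDerivAt_cos y).sub (hasDerivAt_cosTaylor_succ n y)).const_mul _)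
    (by simp [cosTaylor_succ_zero_right]) (fun y hy => ?_) hx
  convert hsin y hy using 1
  ring

theorem cos_sub_cosTaylor_sign (n : ℕ) {x : ℝ} (hx : 0 ≤ x) :
    0 ≤ (-1) ^ (n + 1) * (cos x - cosTaylor (n + 1) x) := by
  induction n generalizing x with
  | zero => simpa [cosTaylor] using cos_le_one x
  | succ n ih =>
    exact cos_sub_cosTaylor_succ_sign_of_sin
      (fun _ hy => sin_sub_sinTaylor_sign_of_cos (fun _ hz => ih hz) hy) hx

theorem sin_sub_sinTaylor_sign (n : ℕ) {x : ℝ} (hx : 0 ≤ x) :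
    0 ≤ (-1) ^ (n + 1) * (sin x - sinTaylor (n + 1) x) :=
  sin_sub_sinTaylor_sign_of_cos (fun _ hy => cos_sub_cosTaylor_sign n hy) hx

theorem abs_sin_sub_sinTaylor_le (n : ℕ) {x : ℝ} (hx : 0 ≤ x) :
    |sin x - sinTaylor n x| ≤ x ^ (2 * n + 1) / (2 * n + 1)! := by
  cases n with
  | zero => simpa [sinTaylor, abs_of_nonneg hx] using abs_sin_le_abs (x := x)
  | succ n =>
    have hlow := sin_sub_sinTaylor_sign n hx
    have hhigh := sin_sub_sinTaylor_sign (n + 1) hx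
    set e : ℝ := (-1) ^ (n + 1)
    have he : e * e = 1 := by rw [← mul_pow]; norm_num
    -- consecutive remainders differ by the next Taylor term, and carry opposite signs
    have hnext : (-1) ^ (n + 1 + 1) * (sin x - sinTaylor (n + 1 + 1) x) =
        x ^ (2 * (n + 1) + 1) / (2 * (n + 1) + 1)! - e * (sin x - sinTaylor (n + 1) x) := by
      rw [sinTaylor_succ (n + 1), pow_succ]
      linear_combination (x ^ (2 * (n + 1) + 1) / (2 * (n + 1) + 1)!) * he
    calc |sin x - sinTaylor (n + 1) x| = |e * (sin x - sinTaylor (n + 1) x)| := by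
          rw [abs_mul, abs_neg_one_pow, one_mul]
      _ = e * (sin x - sinTaylor (n + 1) x) := abs_of_nonneg hlow
      _ ≤ x ^ (2 * (n + 1) + 1) / (2 * (n + 1) + 1)! := by linarith

end Real

theorem Var2_eq (r T : ℝ) : Var2 r T = r ^ 2 * (2 * T - sin (2 * T)) / (4 * T) := by
  rw [Var2]
  simp_rw [mul_pow]
  rw [intervalIntegral.integral_const_mul, integral_sin_sq, sin_neg, cos_neg, sin_two_mul]
  ring

/-- for every real `r`, as `T → 0⁺`,
`Var₂(T) = (r² T² / 3)(1 − T²/5) + O(T⁶)`; that is,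
`T ↦ Var₂(T) − (r² T² / 3)(1 − T²/5)` is big-O of `T ↦ T⁶` along the filter of
punctured right neighborhoods of `0`. -/
theorem variance_second_coordinate_taylor (r : ℝ) :
    (fun T : ℝ => Var2 r T - (r ^ 2 * T ^ 2 / 3) * (1 - T ^ 2 / 5))
      =O[nhdsWithin 0 (Set.Ioi 0)] (fun T : ℝ => T ^ 6) := by
  refine IsBigO.of_bound (2 / 315 * r ^ 2) ?_
  filter_upwards [self_mem_nhdsWithin] with T (hT : 0 < T)
  have hdiff : Var2 r T - (r ^ 2 * T ^ 2 / 3) * (1 - T ^ 2 / 5) =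
      -(r ^ 2 / (4 * T)) * (sin (2 * T) - sinTaylor 3 (2 * T)) := by
    rw [Var2_eq, sinTaylor_three]
    field_simp
    ring
  have hTaylor := abs_sin_sub_sinTaylor_le 3 (by positivity : 0 ≤ 2 * T)
  rw [hdiff, norm_mul, norm_neg, Real.norm_of_nonneg (by positivity),
    Real.norm_of_nonneg (by positivity : 0 ≤ T ^ 6), Real.norm_eq_abs]
  calc r ^ 2 / (4 * T) * |sin (2 * T) - sinTaylor 3 (2 * T)|
      ≤ r ^ 2 / (4 * T) * ((2 * T) ^ 7 / 7!) := by gcongr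
    _ = 2 / 315 * r ^ 2 * T ^ 6 := by
      field_simp
      norm_num [factorial]
      ring
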